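/- arXiv:2305.01612 — 3 statements merged into one kernel-verified Lean document; each statement's English description precedes it below -/
import Mathlib

section
/- Let b : [0,1] → ℝ be absolutely continuous with b(0)=0 and b' ∈ L²([0,1]), and let k(x) = (1−x)∫₀^x b'(y)/(1−y) dy. Then k(x)²/(1−x) → 0 as x → 1⁻. -/
/-!
Write `I x = ∫₀ˣ b' y / (1 - y) dy`, so that `k x ^ 2 / (1 - x) = (1 - x) * I x ^ 2`. For
`a ≤ x < 1`, Cauchy–Schwarz together with `∫ₐˣ (1 - y)⁻² dy ≤ (1 - x)⁻¹` bounds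
`(1 - x) * (∫ₐˣ b' y / (1 - y) dy) ^ 2` by the tail `∫ₐ¹ b'²`, hence
`(1 - x) * I x ^ 2 ≤ 2 (1 - x) I a ^ 2 + 2 ∫ₐ¹ b'²`. Letting `x → 1` kills the first term,
and the tail is small once `a` is close to `1`.
-/

open MeasureTheory Set Filter Topology

theorem sq_integral_mul_le_integral_sq_mul_integral_sq {α : Type*} [MeasurableSpace α]
    {μ : Measure α} {f g : α → ℝ} (hf : MemLp f 2 μ) (hg : MemLp g 2 μ) :
    (∫ a, f a * g a ∂μ) ^ 2 ≤ (∫ a, f a ^ 2 ∂μ) * ∫ a, g a ^ 2 ∂μ := by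
  have key := real_inner_mul_inner_self_le (hf.toLp f) (hg.toLp g)
  have congr {u u' v v' : α → ℝ} (hu : u =ᵐ[μ] u') (hv : v =ᵐ[μ] v') :
      ∫ a, u a * v a ∂μ = ∫ a, u' a * v' a ∂μ :=
    integral_congr_ae (hu.mul hv)
  simp only [L2.inner_def, Real.inner_apply, congr hf.coeFn_toLp hg.coeFn_toLp,
    congr hf.coeFn_toLp hf.coeFn_toLp, congr hg.coeFn_toLp hg.coeFn_toLp] at key
  simpa only [sq] using key

theorem tendsto_intervalIntegral_nhdsLT {E : Type*} [NormedAddCommGroup E] [NormedSpace ℝ E]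
    {f : ℝ → E} {a b : ℝ} (hab : a < b) (hf : IntegrableOn f (Icc a b)) :
    Tendsto (fun c => ∫ y in c..b, f y) (𝓝[<] b) (𝓝 0) := by
  have hcont := intervalIntegral.continuousOn_primitive_interval_left (μ := volume)
    (uIcc_of_le hab.le ▸ hf)
  rw [uIcc_of_le hab.le] at hcont
  simpa using ((hcont b (right_mem_Icc.2 hab.le)).mono_of_mem_nhdsWithin
    (Icc_mem_nhdsLT hab)).tendsto

section WeightOneSub

variable {f : ℝ → ℝ} {a x : ℝ}

theorem continuousOn_inv_one_sub : ContinuousOn (fun y : ℝ => (1 - y)⁻¹) (Iio 1) :=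
  (continuousOn_const.sub continuousOn_id).inv₀ fun _ hy => (sub_pos.2 hy).ne'

theorem integral_inv_one_sub_sq (hax : a ≤ x) (hx : x < 1) :
    ∫ y in a..x, (1 - y)⁻¹ ^ 2 = (1 - x)⁻¹ - (1 - a)⁻¹ := by
  have hsub : uIcc a x ⊆ Iio 1 := by
    rw [uIcc_of_le hax]; exact fun y hy => hy.2.trans_lt hx
  refine intervalIntegral.integral_eq_sub_of_hasDerivAt (f := fun y => (1 - y)⁻¹)
    (fun y hy => ?_) ((continuousOn_inv_one_sub.pow 2).mono hsub).intervalIntegrable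
  have h := ((hasDerivAt_id' y).const_sub 1).fun_inv (sub_pos.2 (hsub hy)).ne'
  rwa [neg_neg, one_div, ← inv_pow] at h

theorem sq_integral_div_one_sub_le (hax : a ≤ x) (hx : x < 1)
    (hf : MemLp f 2 (volume.restrict (Ioc a x))) :
    (∫ y in a..x, f y / (1 - y)) ^ 2 ≤ (∫ y in a..x, f y ^ 2) / (1 - x) := by
  have hmono : MonotoneOn (fun y : ℝ => (1 - y)⁻¹) (Icc a x) := fun u _ v hv huv =>
    inv_anti₀ (sub_pos.2 (hv.2.trans_lt hx)) (by linarith)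
  have hg : MemLp (fun y : ℝ => (1 - y)⁻¹) 2 (volume.restrict (Ioc a x)) :=
    (hmono.memLp_isCompact isCompact_Icc).mono_measure
      (Measure.restrict_mono Ioc_subset_Icc_self le_rfl)
  calc (∫ y in a..x, f y / (1 - y)) ^ 2
      ≤ (∫ y in a..x, f y ^ 2) * ∫ y in a..x, (1 - y)⁻¹ ^ 2 := by
        simpa only [intervalIntegral.integral_of_le hax, div_eq_mul_inv] using
          sq_integral_mul_le_integral_sq_mul_integral_sq hf hg
    _ ≤ (∫ y in a..x, f y ^ 2) * (1 - x)⁻¹ := by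
        rw [integral_inv_one_sub_sq hax hx]
        have : 0 ≤ (1 - a)⁻¹ := inv_nonneg.2 (by linarith)
        gcongr
        · exact intervalIntegral.integral_nonneg hax fun _ _ => sq_nonneg _
        · linarith
    _ = (∫ y in a..x, f y ^ 2) / (1 - x) := (div_eq_mul_inv _ _).symm

theorem intervalIntegrable_div_one_sub (hax : a ≤ x) (hx : x < 1)
    (hf : IntegrableOn f (Icc a x)) :
    IntervalIntegrable (fun y => f y / (1 - y)) volume a x := by
  rw [intervalIntegrable_iff_integrableOn_Icc_of_le hax]
  simpa only [div_eq_mul_inv] using hf.mul_continuousOn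
    (continuousOn_inv_one_sub.mono fun y hy => hy.2.trans_lt hx) isCompact_Icc

theorem one_sub_mul_sq_integral_div_one_sub_le (ha : 0 ≤ a)
    (hax : a ≤ x) (hx : x < 1) (hf : MemLp f 2 (volume.restrict (Icc 0 1))) :
    (1 - x) * (∫ y in 0..x, f y / (1 - y)) ^ 2 ≤
      2 * ((1 - x) * (∫ y in 0..a, f y / (1 - y)) ^ 2) + 2 * ∫ y in a..1, f y ^ 2 := by
  have hfi : IntegrableOn f (Icc 0 1) := hf.integrable one_le_two
  have hsplit := intervalIntegral.integral_add_adjacent_intervals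
    (intervalIntegrable_div_one_sub ha (hax.trans_lt hx)
      (hfi.mono_set (Icc_subset_Icc le_rfl (by linarith))))
    (intervalIntegrable_div_one_sub hax hx (hfi.mono_set (Icc_subset_Icc ha hx.le)))
  have htail : (1 - x) * (∫ y in a..x, f y / (1 - y)) ^ 2 ≤ ∫ y in a..1, f y ^ 2 := by
    have hfax : MemLp f 2 (volume.restrict (Ioc a x)) := hf.mono_measure
      (Measure.restrict_mono (Ioc_subset_Icc_self.trans (Icc_subset_Icc ha hx.le)) le_rfl)
    calc (1 - x) * (∫ y in a..x, f y / (1 - y)) ^ 2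
        ≤ (1 - x) * ((∫ y in a..x, f y ^ 2) / (1 - x)) := by
          gcongr
          exact sq_integral_div_one_sub_le hax hx hfax
      _ = ∫ y in a..x, f y ^ 2 := mul_div_cancel₀ _ (sub_pos.2 hx).ne'
      _ ≤ ∫ y in a..1, f y ^ 2 := by
          refine intervalIntegral.integral_mono_interval le_rfl hax hx.le
            (ae_of_all _ fun _ => sq_nonneg _) ?_
          rw [intervalIntegrable_iff_integrableOn_Icc_of_le (hax.trans hx.le)]
          exact IntegrableOn.mono_set hf.integrable_sq (Icc_subset_Icc ha le_rfl)
  rw [← hsplit]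
  nlinarith [add_sq_le (a := ∫ y in 0..a, f y / (1 - y)) (b := ∫ y in a..x, f y / (1 - y))]

theorem tendsto_one_sub_mul_sq_integral_div_one_sub
    (hf : MemLp f 2 (volume.restrict (Icc 0 1))) :
    Tendsto (fun x => (1 - x) * (∫ y in 0..x, f y / (1 - y)) ^ 2) (𝓝[<] 1) (𝓝 0) := by
  have htail := tendsto_intervalIntegral_nhdsLT zero_lt_one hf.integrable_sq
  refine tendsto_order.2 ⟨fun c hc => ?_, fun ε hε => ?_⟩
  · filter_upwards [self_mem_nhdsWithin] with x hx
    exact hc.trans_le (mul_nonneg (sub_nonneg.2 (le_of_lt hx)) (sq_nonneg _))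
  obtain ⟨a, hTa, ha0, ha1⟩ := ((htail.eventually (eventually_lt_nhds (half_pos hε))).and
    (Ico_mem_nhdsLT zero_lt_one)).exists
  set A := ∫ y in 0..a, f y / (1 - y)
  set T := ∫ y in a..1, f y ^ 2
  have hbound : Tendsto (fun x : ℝ => 2 * ((1 - x) * A ^ 2) + 2 * T) (𝓝[<] 1) (𝓝 (2 * T)) :=
    (Continuous.tendsto' (by fun_prop) 1 _ (by simp)).mono_left nhdsWithin_le_nhds
  filter_upwards [hbound.eventually (eventually_lt_nhds (show 2 * T < ε by linarith)),
    Ioo_mem_nhdsLT ha1] with x hx hxa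
  exact (one_sub_mul_sq_integral_div_one_sub_le ha0 hxa.1.le hxa.2 hf).trans_lt hx

end WeightOneSub

theorem stmt3_general (b' : ℝ → ℝ) (k : ℝ → ℝ)
    (hb'int : IntegrableOn b' (Set.Icc 0 1))
    (hb'sq : IntegrableOn (fun y => (b' y) ^ 2) (Set.Icc 0 1))
    (hk : ∀ x ∈ Set.Ico (0 : ℝ) 1,
      k x = (1 - x) * ∫ y in (0 : ℝ)..x, b' y / (1 - y)) :
    Filter.Tendsto (fun x => k x ^ 2 / (1 - x))
      (nhdsWithin 1 (Set.Iio 1)) (nhds 0) := by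
  have hb' : MemLp b' 2 (volume.restrict (Icc 0 1)) :=
    (memLp_two_iff_integrable_sq hb'int.aestronglyMeasurable).2 hb'sq
  refine (tendsto_one_sub_mul_sq_integral_div_one_sub hb').congr' ?_
  filter_upwards [Ico_mem_nhdsLT zero_lt_one] with x hx
  have hx1 : 1 - x ≠ 0 := (sub_pos.2 hx.2).ne'
  rw [hk x hx]
  field_simp

/-- If `b` is absolutely continuous on `[0,1]` with `b 0 = 0` and `b' ∈ L²([0,1])`,
and `k x = (1-x) ∫₀ˣ b' y/(1-y) dy`, then `k x ^ 2 / (1 - x) → 0` as `x → 1⁻`. -/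
theorem stmt3 (b b' : ℝ → ℝ) (k : ℝ → ℝ)
    (hb'int : IntegrableOn b' (Set.Icc 0 1))
    (hb'sq : IntegrableOn (fun y => (b' y) ^ 2) (Set.Icc 0 1))
    (hb : ∀ x ∈ Set.Icc (0 : ℝ) 1, b x = ∫ y in (0 : ℝ)..x, b' y)
    (hk : ∀ x ∈ Set.Ico (0 : ℝ) 1,
      k x = (1 - x) * ∫ y in (0 : ℝ)..x, b' y / (1 - y)) :
    Filter.Tendsto (fun x => k x ^ 2 / (1 - x))
      (nhdsWithin 1 (Set.Iio 1)) (nhds 0) :=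
  stmt3_general b' k hb'int hb'sq hk
end

section
/- Let k : [0,1] → ℝ be absolutely continuous with k(0)=0, k' ∈ L²([0,1]), lim_{x→1} k(x)²/(1−x) = 0, and define b(x) = k(x) + ∫₀^x k(y)/(1−y) dy. Then ∫₀^1 b'(x)² dx = ∫₀^1 k'(x)² dx, i.e., the L² norms of the derivatives of b and k coincide. -/
open MeasureTheory

open Set Topology Filter

lemma fubini_tri {t : ℝ} {f g : ℝ → ℝ}
    (hf : IntegrableOn f (Ioc 0 t)) (hg : IntegrableOn g (Ioc 0 t)) :
    ∫ x in Ioc (0:ℝ) t, (∫ y in Ioc (0:ℝ) x, f y) * g x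
      = ∫ y in Ioc (0:ℝ) t, f y * ∫ x in Ioc y t, g x := by
  set μt := volume.restrict (Ioc (0:ℝ) t) with hμt
  have hmeas : MeasurableSet {p : ℝ × ℝ | p.2 ≤ p.1} :=
    measurableSet_le measurable_snd measurable_fst
  have hFi : Integrable (fun p : ℝ × ℝ => if p.2 ≤ p.1 then f p.2 * g p.1 else 0)
      (μt.prod μt) := by
    have h1 : Integrable (fun p : ℝ × ℝ => g p.1 * f p.2) (μt.prod μt) :=
      Integrable.mul_prod hg hf
    have h2 : Integrable (fun p : ℝ × ℝ => f p.2 * g p.1) (μt.prod μt) := by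
      simpa [mul_comm] using h1
    have := h2.indicator hmeas
    refine this.congr (Filter.Eventually.of_forall fun p => ?_)
    by_cases h : p.2 ≤ p.1 <;> simp [Set.indicator, h]
  have lhs_eq : ∫ x in Ioc (0:ℝ) t, (∫ y in Ioc (0:ℝ) x, f y) * g x
      = ∫ x, (∫ y, (if y ≤ x then f y * g x else 0) ∂μt) ∂μt := by
    refine setIntegral_congr_fun measurableSet_Ioc fun x hx => ?_
    have hsub : Iic x ∩ Ioc (0:ℝ) t = Ioc 0 x := by
      ext z; simp only [mem_inter_iff, mem_Iic, mem_Ioc]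
      constructor
      · rintro ⟨h1, h2, h3⟩; exact ⟨h2, h1⟩
      · rintro ⟨h1, h2⟩; exact ⟨h2, h1, h2.trans hx.2⟩
    have : (∫ y, (if y ≤ x then f y else 0) ∂μt) = ∫ y in Ioc (0:ℝ) x, f y := by
      have : (fun y => if y ≤ x then f y else 0) = (Iic x).indicator f := by
        ext y; by_cases h : y ≤ x <;> simp [Set.indicator, h]
      rw [this, hμt, integral_indicator measurableSet_Iic,
        Measure.restrict_restrict measurableSet_Iic, hsub]
    rw [← this, ← integral_mul_const]
    congr 1; ext y; by_cases h : y ≤ x <;> simp [h]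
  have rhs_eq : ∀ y ∈ Ioc (0:ℝ) t,
      (∫ x, (if y ≤ x then f y * g x else 0) ∂μt) = f y * ∫ x in Ioc y t, g x := by
    intro y hy
    have hsub : Ici y ∩ Ioc (0:ℝ) t = Icc y t := by
      ext z; simp only [mem_inter_iff, mem_Ici, mem_Ioc, mem_Icc]
      constructor
      · rintro ⟨h1, h2, h3⟩; exact ⟨h1, h3⟩
      · rintro ⟨h1, h2⟩; exact ⟨h1, hy.1.trans_le h1, h2⟩
    have : (∫ x, (if y ≤ x then g x else 0) ∂μt) = ∫ x in Ioc y t, g x := by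
      have : (fun x => if y ≤ x then g x else 0) = (Ici y).indicator g := by
        ext x; by_cases h : y ≤ x <;> simp [Set.indicator, h]
      rw [this, hμt, integral_indicator measurableSet_Ici,
        Measure.restrict_restrict measurableSet_Ici, hsub, integral_Icc_eq_integral_Ioc]
    rw [← this, ← integral_const_mul]
    congr 1; ext x; by_cases h : y ≤ x <;> simp [h]
  rw [lhs_eq]
  rw [integral_integral_swap (by exact hFi)]
  exact setIntegral_congr_fun measurableSet_Ioc rhs_eq

lemma primitive_contOn {t : ℝ} {v' : ℝ → ℝ} (hv' : IntegrableOn v' (Ioc 0 t)) :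
    ContinuousOn (fun x => ∫ y in Ioc (0:ℝ) x, v' y) (Icc 0 t) :=
  intervalIntegral.continuousOn_primitive ((integrableOn_Icc_iff_integrableOn_Ioc enorm_ne_top).2 hv')

lemma mul_primitive_integrable {t : ℝ} {u' v' : ℝ → ℝ}
    (hu' : IntegrableOn u' (Ioc 0 t)) (hv' : IntegrableOn v' (Ioc 0 t)) :
    IntegrableOn (fun x => u' x * ∫ y in Ioc (0:ℝ) x, v' y) (Ioc 0 t) := by
  set V := fun x => ∫ y in Ioc (0:ℝ) x, v' y with hV
  have hVm : AEStronglyMeasurable V (volume.restrict (Ioc (0:ℝ) t)) :=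
    ((primitive_contOn hv').mono Ioc_subset_Icc_self).aestronglyMeasurable measurableSet_Ioc
  have hbound : ∀ᵐ x ∂(volume.restrict (Ioc (0:ℝ) t)),
      ‖V x‖ ≤ ∫ y in Ioc (0:ℝ) t, ‖v' y‖ := by
    filter_upwards [ae_restrict_mem measurableSet_Ioc] with x hx
    calc ‖V x‖ ≤ ∫ y in Ioc (0:ℝ) x, ‖v' y‖ := norm_integral_le_integral_norm _
    _ ≤ ∫ y in Ioc (0:ℝ) t, ‖v' y‖ := by
        apply setIntegral_mono_set hv'.norm
        · exact Filter.Eventually.of_forall fun y => norm_nonneg _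
        · exact HasSubset.Subset.eventuallyLE (Ioc_subset_Ioc le_rfl hx.2)
  have := hu'.bdd_mul (c := ∫ y in Ioc (0:ℝ) t, ‖v' y‖) hVm hbound
  exact this.congr (Filter.Eventually.of_forall fun x => mul_comm _ _)

lemma parts {t : ℝ} {u' v' : ℝ → ℝ}
    (hu' : IntegrableOn u' (Ioc 0 t)) (hv' : IntegrableOn v' (Ioc 0 t)) :
    (∫ x in Ioc (0:ℝ) t, (∫ y in Ioc (0:ℝ) x, u' y) * v' x)
      + ∫ x in Ioc (0:ℝ) t, u' x * (∫ y in Ioc (0:ℝ) x, v' y)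
      = (∫ y in Ioc (0:ℝ) t, u' y) * (∫ y in Ioc (0:ℝ) t, v' y) := by
  rw [fubini_tri hu' hv']
  have htail : ∀ y ∈ Ioc (0:ℝ) t,
      u' y * ∫ x in Ioc y t, v' x
        = u' y * (∫ x in Ioc (0:ℝ) t, v' x) - u' y * ∫ x in Ioc (0:ℝ) y, v' x := by
    intro y hy
    have hsplit : ∫ x in Ioc (0:ℝ) t, v' x
        = (∫ x in Ioc (0:ℝ) y, v' x) + ∫ x in Ioc y t, v' x := by
      rw [← setIntegral_union (Ioc_disjoint_Ioc_of_le le_rfl) measurableSet_Ioc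
        (hv'.mono_set (Ioc_subset_Ioc le_rfl hy.2)) (hv'.mono_set (Ioc_subset_Ioc hy.1.le le_rfl)),
        Ioc_union_Ioc_eq_Ioc hy.1.le hy.2]
    rw [hsplit]; ring
  rw [setIntegral_congr_fun measurableSet_Ioc htail, integral_sub
    (hu'.mul_const _) (mul_primitive_integrable hu' hv'), integral_mul_const]
  ring

section main
variable (k k' : ℝ → ℝ)
  (hk'int : IntegrableOn k' (Set.Icc 0 1))
  (hk : ∀ x ∈ Set.Icc (0 : ℝ) 1, k x = ∫ y in (0 : ℝ)..x, k' y)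

-- G and its "derivative"
noncomputable def Gg : ℝ → ℝ := fun x => (1 - x)⁻¹
noncomputable def Gg' : ℝ → ℝ := fun x => ((1 - x)⁻¹) ^ 2

lemma Gg_contOn {τ : ℝ} (hτ : τ < 1) : ContinuousOn Gg (Icc 0 τ) := by
  apply ContinuousOn.inv₀ (continuous_const.sub continuous_id).continuousOn
  intro x hx; have h2 := hx.2; intro h
  have : (1:ℝ) = x := by simpa using sub_eq_zero.mp h
  linarith

lemma Gg'_contOn {τ : ℝ} (hτ : τ < 1) : ContinuousOn Gg' (Icc 0 τ) :=
  (Gg_contOn hτ).pow 2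

lemma Gg_ftc {y τ : ℝ} (hy : 0 ≤ y) (hyτ : y ≤ τ) (hτ : τ < 1) :
    ∫ x in Ioc y τ, Gg' x = Gg τ - Gg y := by
  rw [← intervalIntegral.integral_of_le hyτ]
  apply intervalIntegral.integral_eq_sub_of_hasDerivAt
  · intro x hx
    rw [uIcc_of_le hyτ] at hx
    have hne : (1 : ℝ) - x ≠ 0 := by
      have := hx.2; intro h; linarith [sub_eq_zero.mp h]
    have h1 : HasDerivAt (fun x : ℝ => 1 - x) (-1) x := (hasDerivAt_id x).const_sub 1
    have h2 := h1.inv hne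
    convert h2 using 1
    · rfl
    · rfl
    · simp [Gg', inv_pow]
  · apply ContinuousOn.intervalIntegrable
    rw [uIcc_of_le hyτ]
    exact (Gg'_contOn hτ).mono (Icc_subset_Icc hy le_rfl)

end main

section main2
variable {k k' : ℝ → ℝ}

lemma kg_rep (hk'int : IntegrableOn k' (Set.Icc 0 1))
    (hki : ∀ x ∈ Icc (0:ℝ) 1, k x = ∫ y in Ioc (0:ℝ) x, k' y)
    {x : ℝ} (hx0 : 0 < x) (hx1 : x < 1) :
    ∫ y in Ioc (0:ℝ) x, (k' y * Gg y + k y * Gg' y) = k x * Gg x := by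
  have hsub : Ioc (0:ℝ) x ⊆ Icc 0 1 :=
    Ioc_subset_Icc_self.trans (Icc_subset_Icc le_rfl hx1.le)
  have hk'x : IntegrableOn k' (Ioc 0 x) := hk'int.mono_set hsub
  have hG'x : IntegrableOn Gg' (Ioc 0 x) :=
    ((Gg'_contOn hx1).integrableOn_Icc).mono_set Ioc_subset_Icc_self
  have kcont : ContinuousOn k (Icc 0 1) :=
    (intervalIntegral.continuousOn_primitive hk'int).congr hki
  have hkGint : IntegrableOn (fun y => k y * Gg' y) (Ioc 0 x) :=
    (((kcont.mono (Icc_subset_Icc le_rfl hx1.le)).mul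
      (Gg'_contOn hx1)).integrableOn_Icc).mono_set Ioc_subset_Icc_self
  have hGgmeas : AEStronglyMeasurable Gg (volume.restrict (Ioc (0:ℝ) x)) := by
    exact ((measurable_const.sub measurable_id).inv).aestronglyMeasurable.restrict
  have hGgbd : ∀ᵐ y ∂(volume.restrict (Ioc (0:ℝ) x)), ‖Gg y‖ ≤ (1 - x)⁻¹ := by
    filter_upwards [ae_restrict_mem measurableSet_Ioc] with y hy
    have h1 : (0:ℝ) < 1 - x := by linarith
    have h2 : (0:ℝ) < 1 - y := by linarith [hy.2]
    show |(1 - y)⁻¹| ≤ (1 - x)⁻¹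
    rw [abs_of_pos (show (0:ℝ) < (1 - y)⁻¹ by positivity)]
    exact inv_anti₀ h1 (by linarith [hy.2])
  have hk'Gint : IntegrableOn (fun y => k' y * Gg y) (Ioc 0 x) := by
    have := hk'x.bdd_mul (c := (1 - x)⁻¹) hGgmeas hGgbd
    exact this.congr (Filter.Eventually.of_forall fun y => mul_comm _ _)
  have h1 := fubini_tri hk'x hG'x
  have hL : ∫ s in Ioc (0:ℝ) x, (∫ y in Ioc (0:ℝ) s, k' y) * Gg' s
      = ∫ s in Ioc (0:ℝ) x, k s * Gg' s := by
    refine setIntegral_congr_fun measurableSet_Ioc fun s hs => ?_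
    rw [hki s (hsub hs)]
  have hR : ∫ y in Ioc (0:ℝ) x, k' y * ∫ s in Ioc y x, Gg' s
      = ∫ y in Ioc (0:ℝ) x, (k' y * Gg x - k' y * Gg y) := by
    refine setIntegral_congr_fun measurableSet_Ioc fun y hy => ?_
    rw [Gg_ftc hy.1.le hy.2 hx1]; ring
  rw [hL, hR] at h1
  rw [integral_sub (hk'x.mul_const _) hk'Gint, integral_mul_const,
    ← hki x ⟨hx0.le, hx1.le⟩] at h1
  rw [integral_add hk'Gint hkGint, h1]
  ring

end main2

section main3
variable {k k' : ℝ → ℝ}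

lemma k_contOn (hk'int : IntegrableOn k' (Set.Icc 0 1))
    (hki : ∀ x ∈ Icc (0:ℝ) 1, k x = ∫ y in Ioc (0:ℝ) x, k' y) :
    ContinuousOn k (Icc 0 1) :=
  (intervalIntegral.continuousOn_primitive hk'int).congr hki

lemma kdiv_contOn (hk'int : IntegrableOn k' (Set.Icc 0 1))
    (hki : ∀ x ∈ Icc (0:ℝ) 1, k x = ∫ y in Ioc (0:ℝ) x, k' y)
    {τ : ℝ} (hτ1 : τ < 1) :
    ContinuousOn (fun x => k x / (1 - x)) (Icc 0 τ) := by
  apply ContinuousOn.div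
  · exact (k_contOn hk'int hki).mono (Icc_subset_Icc le_rfl hτ1.le)
  · exact (continuous_const.sub continuous_id).continuousOn
  · intro x hx; have h2 := hx.2; intro h
    have : (1:ℝ) = x := by simpa using sub_eq_zero.mp h
    linarith

lemma q_intOn (hk'int : IntegrableOn k' (Set.Icc 0 1))
    (hki : ∀ x ∈ Icc (0:ℝ) 1, k x = ∫ y in Ioc (0:ℝ) x, k' y)
    {τ : ℝ} (hτ1 : τ < 1) :
    IntegrableOn (fun x => (k x / (1 - x))^2) (Ioc 0 τ) :=
  (((kdiv_contOn hk'int hki hτ1).pow 2).integrableOn_Icc).mono_set Ioc_subset_Icc_self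

lemma r_intOn (hk'int : IntegrableOn k' (Set.Icc 0 1))
    (hki : ∀ x ∈ Icc (0:ℝ) 1, k x = ∫ y in Ioc (0:ℝ) x, k' y)
    {τ : ℝ} (hτ1 : τ < 1) :
    IntegrableOn (fun x => k' x * (k x / (1 - x))) (Ioc 0 τ) := by
  have hsub : Ioc (0:ℝ) τ ⊆ Icc 0 1 :=
    Ioc_subset_Icc_self.trans (Icc_subset_Icc le_rfl hτ1.le)
  have hk'τ : IntegrableOn k' (Ioc 0 τ) := hk'int.mono_set hsub
  obtain ⟨C, hC⟩ := isCompact_Icc.exists_bound_of_continuousOn (kdiv_contOn hk'int hki hτ1)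
  have hmeas : AEStronglyMeasurable (fun x => k x / (1 - x)) (volume.restrict (Ioc (0:ℝ) τ)) :=
    ((kdiv_contOn hk'int hki hτ1).mono Ioc_subset_Icc_self).aestronglyMeasurable
      measurableSet_Ioc
  have hbd : ∀ᵐ x ∂(volume.restrict (Ioc (0:ℝ) τ)), ‖k x / (1 - x)‖ ≤ C := by
    filter_upwards [ae_restrict_mem measurableSet_Ioc] with x hx
    exact hC x (Ioc_subset_Icc_self hx)
  have := hk'τ.bdd_mul (c := C) hmeas hbd
  exact this.congr (Filter.Eventually.of_forall fun y => mul_comm _ _)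

lemma ident (hk'int : IntegrableOn k' (Set.Icc 0 1))
    (hki : ∀ x ∈ Icc (0:ℝ) 1, k x = ∫ y in Ioc (0:ℝ) x, k' y)
    {t : ℝ} (ht0 : 0 < t) (ht1 : t < 1) :
    (∫ x in Ioc (0:ℝ) t, (k x / (1 - x))^2)
      + 2 * ∫ x in Ioc (0:ℝ) t, k' x * (k x / (1 - x))
      = k t ^ 2 / (1 - t) := by
  have hsub : Ioc (0:ℝ) t ⊆ Icc 0 1 :=
    Ioc_subset_Icc_self.trans (Icc_subset_Icc le_rfl ht1.le)
  have hk't : IntegrableOn k' (Ioc 0 t) := hk'int.mono_set hsub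
  have hq := q_intOn hk'int hki ht1
  have hr := r_intOn hk'int hki ht1
  set v' : ℝ → ℝ := fun y => k' y * Gg y + k y * Gg' y with hv'def
  have hG't : IntegrableOn Gg' (Ioc 0 t) :=
    ((Gg'_contOn ht1).integrableOn_Icc).mono_set Ioc_subset_Icc_self
  have kcont := k_contOn hk'int hki
  have hkGint : IntegrableOn (fun y => k y * Gg' y) (Ioc 0 t) :=
    (((kcont.mono (Icc_subset_Icc le_rfl ht1.le)).mul
      (Gg'_contOn ht1)).integrableOn_Icc).mono_set Ioc_subset_Icc_self
  have hGgmeas : AEStronglyMeasurable Gg (volume.restrict (Ioc (0:ℝ) t)) :=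
    ((measurable_const.sub measurable_id).inv).aestronglyMeasurable.restrict
  have hGgbd : ∀ᵐ y ∂(volume.restrict (Ioc (0:ℝ) t)), ‖Gg y‖ ≤ (1 - t)⁻¹ := by
    filter_upwards [ae_restrict_mem measurableSet_Ioc] with y hy
    have h1 : (0:ℝ) < 1 - t := by linarith
    have h2 : (0:ℝ) < 1 - y := by linarith [hy.2]
    show |(1 - y)⁻¹| ≤ (1 - t)⁻¹
    rw [abs_of_pos (show (0:ℝ) < (1 - y)⁻¹ by positivity)]
    exact inv_anti₀ h1 (by linarith [hy.2])
  have hk'Gint : IntegrableOn (fun y => k' y * Gg y) (Ioc 0 t) := by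
    have := hk't.bdd_mul (c := (1 - t)⁻¹) hGgmeas hGgbd
    exact this.congr (Filter.Eventually.of_forall fun y => mul_comm _ _)
  have hv'int : IntegrableOn v' (Ioc 0 t) := hk'Gint.add hkGint
  have hp := parts hk't hv'int
  -- rewrite primitives
  have e1 : ∫ x in Ioc (0:ℝ) t, (∫ y in Ioc (0:ℝ) x, k' y) * v' x
      = ∫ x in Ioc (0:ℝ) t, (k' x * (k x * Gg x) + (k x / (1 - x))^2) := by
    refine setIntegral_congr_fun measurableSet_Ioc fun x hx => ?_
    rw [← hki x (hsub hx)]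
    have hne : (1:ℝ) - x ≠ 0 := by
      intro h; have : (1:ℝ) = x := by simpa using sub_eq_zero.mp h
      have := hx.2; linarith
    simp only [hv'def, Gg, Gg', div_eq_mul_inv]
    ring
  have e2 : ∫ x in Ioc (0:ℝ) t, k' x * (∫ y in Ioc (0:ℝ) x, v' y)
      = ∫ x in Ioc (0:ℝ) t, k' x * (k x * Gg x) := by
    refine setIntegral_congr_fun measurableSet_Ioc fun x hx => ?_
    rw [kg_rep hk'int hki hx.1 (lt_of_le_of_lt hx.2 ht1)]
  have e3 : (∫ y in Ioc (0:ℝ) t, k' y) = k t := (hki t ⟨ht0.le, ht1.le⟩).symm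
  have e4 : (∫ y in Ioc (0:ℝ) t, v' y) = k t * Gg t := kg_rep hk'int hki ht0 ht1
  rw [e1, e2, e3, e4] at hp
  have hrG : IntegrableOn (fun x => k' x * (k x * Gg x)) (Ioc 0 t) := by
    refine hr.congr_fun (fun x hx => ?_) measurableSet_Ioc
    simp only [Gg, div_eq_mul_inv]
  rw [integral_add hrG hq] at hp
  have hrr : ∫ x in Ioc (0:ℝ) t, k' x * (k x * Gg x)
      = ∫ x in Ioc (0:ℝ) t, k' x * (k x / (1 - x)) := by
    refine setIntegral_congr_fun measurableSet_Ioc fun x hx => ?_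
    simp only [Gg, div_eq_mul_inv]
  rw [hrr] at hp
  have hne : (1:ℝ) - t ≠ 0 := by
    intro h
    have : (1:ℝ) = t := by simpa using sub_eq_zero.mp h
    linarith
  have : k t * (k t * Gg t) = k t ^ 2 / (1 - t) := by
    simp only [Gg, div_eq_mul_inv]; ring
  linarith [hp]

lemma phiM {k k' : ℝ → ℝ} (hk'int : IntegrableOn k' (Set.Icc 0 1))
    (hki : ∀ x ∈ Icc (0:ℝ) 1, k x = ∫ y in Ioc (0:ℝ) x, k' y)
    (hbdry : Filter.Tendsto (fun x => k x ^ 2 / (1 - x))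
      (nhdsWithin 1 (Set.Iio 1)) (nhds 0)) :
    ∃ M : ℝ, 1 ≤ M ∧ ∀ t ∈ Ioo (0:ℝ) 1, k t ^ 2 / (1 - t) ≤ M := by
  have h1 : ∀ᶠ x in nhdsWithin 1 (Set.Iio 1), k x ^ 2 / (1 - x) < 1 :=
    hbdry.eventually_lt_const zero_lt_one
  rw [Filter.eventually_iff, mem_nhdsLT_iff_exists_Ioo_subset' (zero_lt_one)] at h1
  obtain ⟨c, hc, hsub⟩ := h1
  have hφcont : ContinuousOn (fun x => k x ^ 2 / (1 - x)) (Icc 0 c) := by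
    apply ContinuousOn.div
    · exact ((k_contOn hk'int hki).mono (Icc_subset_Icc le_rfl hc.le)).pow 2
    · exact (continuous_const.sub continuous_id).continuousOn
    · intro x hx; have h2 := hx.2; intro h
      have : (1:ℝ) = x := by simpa using sub_eq_zero.mp h
      have hcc : c < 1 := hc; linarith
  obtain ⟨M₀, hM₀⟩ := isCompact_Icc.exists_bound_of_continuousOn hφcont
  refine ⟨max M₀ 1, le_max_right _ _, fun t ht => ?_⟩
  by_cases hle : t ≤ c
  · have := hM₀ t ⟨ht.1.le, hle⟩
    calc k t ^ 2 / (1 - t) ≤ ‖k t ^ 2 / (1 - t)‖ := le_abs_self _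
    _ ≤ M₀ := this
    _ ≤ max M₀ 1 := le_max_left _ _
  · have : t ∈ Ioo c 1 := ⟨lt_of_not_ge hle, ht.2⟩
    exact le_trans (hsub this).le (le_max_right _ _)

lemma A_bound {k k' : ℝ → ℝ} (hk'int : IntegrableOn k' (Set.Icc 0 1))
    (hk'sq : IntegrableOn (fun x => (k' x) ^ 2) (Set.Icc 0 1))
    (hki : ∀ x ∈ Icc (0:ℝ) 1, k x = ∫ y in Ioc (0:ℝ) x, k' y)
    {M : ℝ} (hM : ∀ t ∈ Ioo (0:ℝ) 1, k t ^ 2 / (1 - t) ≤ M)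
    {t : ℝ} (ht : t ∈ Ioo (0:ℝ) 1) :
    ∫ x in Ioc (0:ℝ) t, (k x / (1 - x)) ^ 2
      ≤ 2 * M + 4 * ∫ x in Ioc (0:ℝ) 1, (k' x) ^ 2 := by
  set C := ∫ x in Ioc (0:ℝ) 1, (k' x) ^ 2 with hC
  set A := ∫ x in Ioc (0:ℝ) t, (k x / (1 - x)) ^ 2 with hA
  set R := ∫ x in Ioc (0:ℝ) t, k' x * (k x / (1 - x)) with hR
  have hid := ident hk'int hki ht.1 ht.2
  have hq := q_intOn hk'int hki ht.2
  have hr := r_intOn hk'int hki ht.2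
  have hk'sqt : IntegrableOn (fun x => (k' x) ^ 2) (Ioc 0 t) :=
    hk'sq.mono_set (Ioc_subset_Icc_self.trans (Icc_subset_Icc le_rfl ht.2.le))
  have habs : |R| ≤ ∫ x in Ioc (0:ℝ) t, ((k' x) ^ 2 + (k x / (1 - x)) ^ 2 / 4) := by
    calc |R| ≤ ∫ x in Ioc (0:ℝ) t, ‖k' x * (k x / (1 - x))‖ := by
          rw [← Real.norm_eq_abs]; exact norm_integral_le_integral_norm _
    _ ≤ ∫ x in Ioc (0:ℝ) t, ((k' x) ^ 2 + (k x / (1 - x)) ^ 2 / 4) := by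
        refine setIntegral_mono_on hr.norm (hk'sqt.add (hq.div_const 4))
          measurableSet_Ioc fun x hx => ?_
        rw [Real.norm_eq_abs, abs_mul]
        nlinarith [sq_nonneg (|k' x| - |k x / (1 - x)| / 2), sq_abs (k' x),
          sq_abs (k x / (1 - x)), abs_nonneg (k' x), abs_nonneg (k x / (1 - x))]
  have hsplit : ∫ x in Ioc (0:ℝ) t, ((k' x) ^ 2 + (k x / (1 - x)) ^ 2 / 4)
      = (∫ x in Ioc (0:ℝ) t, (k' x) ^ 2) + A / 4 := by
    rw [integral_add hk'sqt (hq.div_const 4), integral_div]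
  have hCle : (∫ x in Ioc (0:ℝ) t, (k' x) ^ 2) ≤ C := by
    apply setIntegral_mono_set (hk'sq.mono_set Ioc_subset_Icc_self)
    · exact Filter.Eventually.of_forall fun y => sq_nonneg _
    · exact HasSubset.Subset.eventuallyLE (Ioc_subset_Ioc le_rfl ht.2.le)
  have hMt := hM t ht
  have h1 : -R ≤ |R| := neg_le_abs R
  linarith [habs, hsplit, hCle, hid, hMt, h1]

lemma q_int1 {k k' : ℝ → ℝ} (hk'int : IntegrableOn k' (Set.Icc 0 1))
    (hk'sq : IntegrableOn (fun x => (k' x) ^ 2) (Set.Icc 0 1))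
    (hki : ∀ x ∈ Icc (0:ℝ) 1, k x = ∫ y in Ioc (0:ℝ) x, k' y)
    (hbdry : Filter.Tendsto (fun x => k x ^ 2 / (1 - x))
      (nhdsWithin 1 (Set.Iio 1)) (nhds 0)) :
    IntegrableOn (fun x => (k x / (1 - x)) ^ 2) (Ioc 0 1) := by
  obtain ⟨M, hM1, hM⟩ := phiM hk'int hki hbdry
  set b : ℕ → ℝ := fun n => 1 - 1 / (n + 1) with hbdef
  have hbm : ∀ n : ℕ, b n < 1 := by
    intro n
    have : 0 < 1 / ((n:ℝ) + 1) := by positivity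
    simp only [hbdef]; linarith
  have hb : Filter.Tendsto b Filter.atTop (𝓝 1) := by
    have h1 := tendsto_one_div_add_atTop_nhds_zero_nat (𝕜 := ℝ)
    have h2 := (tendsto_const_nhds : Filter.Tendsto (fun _ : ℕ => (1:ℝ))
      Filter.atTop (nhds 1)).sub h1
    simpa [hbdef, one_div] using h2
  refine integrableOn_Ioc_of_intervalIntegral_norm_bounded_right
    (I := 2 * M + 4 * ∫ x in Ioc (0:ℝ) 1, (k' x) ^ 2)
    (fun n => q_intOn hk'int hki (hbm n)) hb ?_
  filter_upwards [Filter.eventually_ge_atTop 1] with n hn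
  have hn0 : 0 < b n := by
    have h1 : (1:ℝ) ≤ (n:ℝ) := by exact_mod_cast hn
    have h2 : 1 / ((n:ℝ) + 1) ≤ 1 / 2 := by
      apply div_le_div_of_nonneg_left (by norm_num) (by norm_num) (by linarith)
    simp only [hbdef]; linarith
  have heq : ∫ x in Ioc (0:ℝ) (b n), ‖(k x / (1 - x)) ^ 2‖
      = ∫ x in Ioc (0:ℝ) (b n), (k x / (1 - x)) ^ 2 := by
    refine setIntegral_congr_fun measurableSet_Ioc fun x _ => ?_
    rw [Real.norm_eq_abs, abs_of_nonneg (sq_nonneg _)]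
  rw [heq]
  exact A_bound hk'int hk'sq hki hM ⟨hn0, hbm n⟩

lemma r_int1 {k k' : ℝ → ℝ} (hk'int : IntegrableOn k' (Set.Icc 0 1))
    (hk'sq : IntegrableOn (fun x => (k' x) ^ 2) (Set.Icc 0 1))
    (hki : ∀ x ∈ Icc (0:ℝ) 1, k x = ∫ y in Ioc (0:ℝ) x, k' y)
    (hbdry : Filter.Tendsto (fun x => k x ^ 2 / (1 - x))
      (nhdsWithin 1 (Set.Iio 1)) (nhds 0)) :
    IntegrableOn (fun x => k' x * (k x / (1 - x))) (Ioc 0 1) := by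
  have hq1 := q_int1 hk'int hk'sq hki hbdry
  have hbound : IntegrableOn (fun x => (k' x) ^ 2 + (k x / (1 - x)) ^ 2 / 4) (Ioc 0 1) :=
    (hk'sq.mono_set Ioc_subset_Icc_self).add (hq1.div_const 4)
  refine Integrable.mono' hbound ?_ ?_
  · have hk'm : AEStronglyMeasurable k' (volume.restrict (Ioc (0:ℝ) 1)) :=
      (hk'int.mono_set Ioc_subset_Icc_self).aestronglyMeasurable
    have hkm : AEStronglyMeasurable k (volume.restrict (Ioc (0:ℝ) 1)) :=
      ((k_contOn hk'int hki).mono Ioc_subset_Icc_self).aestronglyMeasurable measurableSet_Ioc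
    have hinv : AEStronglyMeasurable (fun x => ((1:ℝ) - x)⁻¹)
        (volume.restrict (Ioc (0:ℝ) 1)) :=
      ((measurable_const.sub measurable_id).inv).aestronglyMeasurable.restrict
    have h0 : AEStronglyMeasurable (fun x => k' x * (k x * ((1:ℝ) - x)⁻¹))
        (volume.restrict (Ioc (0:ℝ) 1)) := hk'm.mul (hkm.mul hinv)
    exact h0.congr (Filter.Eventually.of_forall fun x => by simp [div_eq_mul_inv])
  · refine Filter.Eventually.of_forall fun x => ?_
    rw [Real.norm_eq_abs, abs_mul]
    nlinarith [sq_nonneg (|k' x| - |k x / (1 - x)| / 2), sq_abs (k' x),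
      sq_abs (k x / (1 - x)), abs_nonneg (k' x), abs_nonneg (k x / (1 - x))]

/-- If `k` is absolutely continuous on `[0,1]` with `k 0 = 0`, `k' ∈ L²([0,1])`,
`k x ^2/(1-x) → 0` as `x → 1⁻`, and `b x = k x + ∫₀ˣ k y/(1-y) dy` (so that
`b' x = k' x + k x/(1-x)` a.e.), then `∫₀¹ b'² = ∫₀¹ k'²`. -/
theorem stmt4 (k k' b : ℝ → ℝ)
    (hk'int : IntegrableOn k' (Set.Icc 0 1))
    (hk'sq : IntegrableOn (fun x => (k' x) ^ 2) (Set.Icc 0 1))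
    (hk : ∀ x ∈ Set.Icc (0 : ℝ) 1, k x = ∫ y in (0 : ℝ)..x, k' y)
    (hbdry : Filter.Tendsto (fun x => k x ^ 2 / (1 - x))
      (nhdsWithin 1 (Set.Iio 1)) (nhds 0))
    (hb : ∀ x ∈ Set.Ico (0 : ℝ) 1,
      b x = k x + ∫ y in (0 : ℝ)..x, k y / (1 - y)) :
    ∫ x in (0 : ℝ)..1, (k' x + k x / (1 - x)) ^ 2
      = ∫ x in (0 : ℝ)..1, (k' x) ^ 2 := by
  have hki : ∀ x ∈ Icc (0:ℝ) 1, k x = ∫ y in Ioc (0:ℝ) x, k' y := fun x hx => by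
    rw [hk x hx, intervalIntegral.integral_of_le hx.1]
  have hq1 := q_int1 hk'int hk'sq hki hbdry
  have hr1 := r_int1 hk'int hk'sq hki hbdry
  have hk'sq1 : IntegrableOn (fun x => (k' x) ^ 2) (Ioc 0 1) :=
    hk'sq.mono_set Ioc_subset_Icc_self
  -- the key vanishing identity
  have key : (∫ x in Ioc (0:ℝ) 1, (k x / (1 - x)) ^ 2)
      + 2 * ∫ x in Ioc (0:ℝ) 1, k' x * (k x / (1 - x)) = 0 := by
    haveI : (𝓝[Ioo (0:ℝ) 1] 1).NeBot := right_nhdsWithin_Ioo_neBot zero_lt_one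
    have l1 : Filter.Tendsto (fun t => ∫ x in Ioc (0:ℝ) t, (k x / (1 - x)) ^ 2)
        (𝓝[Ioo (0:ℝ) 1] 1) (𝓝 (∫ x in Ioc (0:ℝ) 1, (k x / (1 - x)) ^ 2)) := by
      have hcont := intervalIntegral.continuousOn_primitive
        (f := fun x => (k x / (1 - x)) ^ 2) (a := 0) (b := 1) (μ := volume)
        ((integrableOn_Icc_iff_integrableOn_Ioc enorm_ne_top).2 hq1)
      have h1 := hcont 1 (by norm_num : (1:ℝ) ∈ Icc 0 1)
      exact h1.mono_left (nhdsWithin_mono 1 Ioo_subset_Icc_self)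
    have l2 : Filter.Tendsto (fun t => ∫ x in Ioc (0:ℝ) t, k' x * (k x / (1 - x)))
        (𝓝[Ioo (0:ℝ) 1] 1) (𝓝 (∫ x in Ioc (0:ℝ) 1, k' x * (k x / (1 - x)))) := by
      have hcont := intervalIntegral.continuousOn_primitive
        (f := fun x => k' x * (k x / (1 - x))) (a := 0) (b := 1) (μ := volume)
        ((integrableOn_Icc_iff_integrableOn_Ioc enorm_ne_top).2 hr1)
      have h1 := hcont 1 (by norm_num : (1:ℝ) ∈ Icc 0 1)
      exact h1.mono_left (nhdsWithin_mono 1 Ioo_subset_Icc_self)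
    have l3 := l1.add (l2.const_mul 2)
    have l4 : Filter.Tendsto
        (fun t => (∫ x in Ioc (0:ℝ) t, (k x / (1 - x)) ^ 2)
          + 2 * ∫ x in Ioc (0:ℝ) t, k' x * (k x / (1 - x)))
        (𝓝[Ioo (0:ℝ) 1] 1) (𝓝 0) := by
      refine (hbdry.mono_left (nhdsWithin_mono 1 Ioo_subset_Iio_self)).congr' ?_
      filter_upwards [self_mem_nhdsWithin] with t ht
      exact (ident hk'int hki ht.1 ht.2).symm
    have := tendsto_nhds_unique l3 l4
    simpa using this
  rw [intervalIntegral.integral_of_le zero_le_one,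
    intervalIntegral.integral_of_le zero_le_one]
  have e1 : ∫ x in Ioc (0:ℝ) 1, (k' x + k x / (1 - x)) ^ 2
      = ∫ x in Ioc (0:ℝ) 1,
          ((k' x) ^ 2 + (2 * (k' x * (k x / (1 - x))) + (k x / (1 - x)) ^ 2)) := by
    refine setIntegral_congr_fun measurableSet_Ioc fun x _ => ?_
    ring
  have hsum : IntegrableOn
      (fun x => 2 * (k' x * (k x / (1 - x))) + (k x / (1 - x)) ^ 2) (Ioc 0 1) :=
    (hr1.const_mul 2).add hq1
  have h2r : IntegrableOn (fun x => 2 * (k' x * (k x / (1 - x)))) (Ioc 0 1) :=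
    hr1.const_mul 2
  rw [e1, integral_add hk'sq1 hsum, integral_add h2r hq1, integral_const_mul]
  linarith [key]
end main3
end

section
/- Fix x ∈ (0,1) and let w : ℝ₊ → ℝ be absolutely continuous with w(0)=0 and ẇ ∈ L²(ℝ₊). Among all absolutely continuous k : [0,1]×ℝ₊ → ℝ with k(0,t)=k(1,t)=k(y,0)=0 satisfying k(x,t) = √(x(1−x)) w(t) for all t, the minimum of (1/2)∫₀^∞∫₀^1 k̇(y,t)² dy dt equals (1/2)∫₀^∞ ẇ(t)² dt, attained at k(y,t) = √(x(1−x)) w(t) (y/x) for y ≤ x and k(y,t) = √(x(1−x)) w(t) (1−y)/(1−x) for y ≥ x. -/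
/-!
With `c = √(x(1-x))`, the constraints say, after Fubini and Lebesgue differentiation in time,
that for a.e. `t` the slice `k̇(·, t)` has mass `c ẇ(t)` on `[0, x]` and `-c ẇ(t)` on `[x, 1]`.
Cauchy–Schwarz on the two pieces gives
`∫₀¹ k̇(y, t)² dy ≥ c² ẇ(t)² / x + c² ẇ(t)² / (1 - x) = ẇ(t)²`,
with equality when `k̇(·, t)` is constant on each piece, which is the tent profile.
-/

open MeasureTheory Set Filter Function

theorem sq_setIntegral_le_measureReal_mul {α : Type*} [MeasurableSpace α] {μ : Measure α}
    {s : Set α} {f : α → ℝ} (hs : μ s ≠ ⊤) (hf : MemLp f 2 (μ.restrict s)) :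
    (∫ a in s, f a ∂μ) ^ 2 ≤ μ.real s * ∫ a in s, f a ^ 2 ∂μ := by
  rcases eq_or_ne (μ s) 0 with h0 | h0
  · simp [Measure.restrict_eq_zero.2 h0]
  have : IsFiniteMeasure (μ.restrict s) := isFiniteMeasure_restrict.2 hs
  have hL : 0 < μ.real s := ENNReal.toReal_pos h0 hs
  have jensen := (even_two.convexOn_pow (𝕜 := ℝ)).map_set_average_le (continuousOn_pow 2)
    isClosed_univ h0 hs (by simp) (hf.integrable one_le_two)
    ((memLp_two_iff_integrable_sq hf.1).1 hf)
  simp only [setAverage_eq, smul_eq_mul] at jensen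
  rw [mul_pow, inv_pow, ← div_eq_inv_mul, ← div_eq_inv_mul,
    div_le_div_iff₀ (by positivity) hL] at jensen
  nlinarith

theorem ae_eq_of_forall_intervalIntegral_eq {E : Type*} [NormedAddCommGroup E] [NormedSpace ℝ E]
    [CompleteSpace E] {f g : ℝ → E}
    (hf : ∀ T, 0 ≤ T → IntervalIntegrable f volume 0 T)
    (hg : ∀ T, 0 ≤ T → IntervalIntegrable g volume 0 T)
    (h : ∀ s, 0 ≤ s → ∫ v in (0:ℝ)..s, f v = ∫ v in (0:ℝ)..s, g v) :
    f =ᵐ[volume.restrict (Ioi 0)] g := by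
  have hderiv := ae_all_iff.2 fun n : ℕ =>
    ((hf n n.cast_nonneg).sub (hg n n.cast_nonneg)).ae_hasDerivAt_integral
  rw [EventuallyEq, ae_restrict_iff' measurableSet_Ioi]
  filter_upwards [hderiv] with v hv (hv0 : 0 < v)
  obtain ⟨n, hn⟩ := exists_nat_gt v
  have hd := hv n (by rw [uIcc_of_le n.cast_nonneg]; exact ⟨hv0.le, hn.le⟩) 0 (by simp)
  -- the primitive of `f - g` vanishes on `[0, ∞)`, so its derivative at `v > 0` is zero
  have hzero : HasDerivAt (fun y => ∫ t in (0:ℝ)..y, f t - g t) 0 v := by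
    refine (hasDerivAt_const v 0).congr_of_eventuallyEq ?_
    filter_upwards [lt_mem_nhds hv0] with y hy
    rw [intervalIntegral.integral_sub (hf y hy.le) (hg y hy.le), h y hy.le, sub_self]
  exact sub_eq_zero.1 (hd.unique hzero)

theorem sq_div_add_sq_div_le_integral_sq {g : ℝ → ℝ} {a x b : ℝ} (hax : a < x) (hxb : x < b)
    (hg : MemLp g 2 (volume.restrict (Ioc a b))) :
    (∫ u in a..x, g u) ^ 2 / (x - a) + (∫ u in x..b, g u) ^ 2 / (b - x) ≤
      ∫ u in a..b, g u ^ 2 := by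
  have hsub : ∀ {c d}, a ≤ c → d ≤ b → MemLp g 2 (volume.restrict (Ioc c d)) := fun hc hd =>
    hg.mono_measure (Measure.restrict_mono (Ioc_subset_Ioc hc hd) le_rfl)
  have hsq : ∀ {c d}, a ≤ c → c ≤ d → d ≤ b → IntervalIntegrable (fun u => g u ^ 2) volume c d :=
    fun hc hcd hd => (intervalIntegrable_iff_integrableOn_Ioc_of_le hcd).2
      ((memLp_two_iff_integrable_sq (hsub hc hd).1).1 (hsub hc hd))
  have csl := sq_setIntegral_le_measureReal_mul (by simp) (hsub le_rfl hxb.le)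
  have csr := sq_setIntegral_le_measureReal_mul (by simp) (hsub hax.le le_rfl)
  simp only [Real.volume_real_Ioc_of_le hax.le, Real.volume_real_Ioc_of_le hxb.le,
    ← intervalIntegral.integral_of_le hax.le, ← intervalIntegral.integral_of_le hxb.le] at csl csr
  rw [← intervalIntegral.integral_add_adjacent_intervals (hsq le_rfl hax.le hxb.le)
    (hsq hax.le hxb.le le_rfl), div_add_div _ _ (by linarith) (by linarith),
    div_le_iff₀ (by nlinarith)]
  nlinarith

theorem intervalIntegral_ite_le {a x b A B : ℝ} (hax : a ≤ x) (hxb : x ≤ b) :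
    ∫ u in a..b, (if u ≤ x then A else B) = (x - a) * A + (b - x) * B := by
  have hleft : EqOn (fun _ => A) (fun u => if u ≤ x then A else B) (uIoc a x) :=
    fun u hu => (if_pos (by rw [uIoc_of_le hax] at hu; exact hu.2)).symm
  have hright : EqOn (fun _ => B) (fun u => if u ≤ x then A else B) (uIoc x b) :=
    fun u hu => (if_neg (by rw [uIoc_of_le hxb] at hu; exact not_le.2 hu.1)).symm
  rw [← intervalIntegral.integral_add_adjacent_intervals
      (intervalIntegrable_const.congr hleft) (intervalIntegrable_const.congr hright),
    ← intervalIntegral.integral_congr_ae (ae_of_all _ fun u hu => hleft hu),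
    ← intervalIntegral.integral_congr_ae (ae_of_all _ fun u hu => hright hu)]
  simp

theorem MeasureTheory.IntegrableOn.of_sq {α : Type*} [MeasurableSpace α] {μ : Measure α} {s : Set α}
    {f : α → ℝ} (hs : μ s ≠ ⊤) (hf : AEStronglyMeasurable f (μ.restrict s))
    (hf2 : IntegrableOn (fun a => f a ^ 2) s μ) : IntegrableOn f s μ :=
  have : IsFiniteMeasure (μ.restrict s) := isFiniteMeasure_restrict.2 hs
  ((memLp_two_iff_integrable_sq hf).2 hf2).integrable one_le_two

section SpaceTimeDensity

variable {k : ℝ → ℝ → ℝ}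

theorem integrableOn_uIoc_prod_uIoc (hk : Measurable (uncurry k))
    (hk2 : IntegrableOn (fun q : ℝ × ℝ => k q.1 q.2 ^ 2) (Icc 0 1 ×ˢ Ioi 0))
    {b : ℝ} (hb : b ∈ Icc (0:ℝ) 1) (T : ℝ) (hT : 0 ≤ T) :
    IntegrableOn (uncurry k) (uIoc 0 b ×ˢ uIoc 0 T) := by
  rw [uIoc_of_le hb.1, uIoc_of_le hT]
  refine IntegrableOn.of_sq ?_ hk.aestronglyMeasurable (hk2.mono_set ?_)
  · exact ((Metric.isBounded_Ioc 0 b).prod (Metric.isBounded_Ioc 0 T)).measure_lt_top.ne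
  · exact prod_mono (Ioc_subset_Icc_self.trans (Icc_subset_Icc_right hb.2)) Ioc_subset_Ioi_self

theorem intervalIntegrable_intervalIntegral_left (hk : Measurable (uncurry k))
    (hk2 : IntegrableOn (fun q : ℝ × ℝ => k q.1 q.2 ^ 2) (Icc 0 1 ×ˢ Ioi 0))
    {b : ℝ} (hb : b ∈ Icc (0:ℝ) 1) (T : ℝ) (hT : 0 ≤ T) :
    IntervalIntegrable (fun v => ∫ u in (0:ℝ)..b, k u v) volume 0 T := by
  have := integrableOn_uIoc_prod_uIoc hk hk2 hb T hT
  rw [IntegrableOn, Measure.volume_eq_prod, ← Measure.prod_restrict] at this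
  simp_rw [intervalIntegrable_iff, intervalIntegral.intervalIntegral_eq_integral_uIoc,
    if_pos hb.1, one_smul]
  exact this.integral_prod_right

theorem ae_intervalIntegral_eq_of_trace (hk : Measurable (uncurry k))
    (hk2 : IntegrableOn (fun q : ℝ × ℝ => k q.1 q.2 ^ 2) (Icc 0 1 ×ˢ Ioi 0))
    {b : ℝ} (hb : b ∈ Icc (0:ℝ) 1) {a : ℝ → ℝ}
    (ha : ∀ T, 0 ≤ T → IntervalIntegrable a volume 0 T)
    (htrace : ∀ s, 0 ≤ s → ∫ u in (0:ℝ)..b, ∫ v in (0:ℝ)..s, k u v = ∫ v in (0:ℝ)..s, a v) :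
    (fun v => ∫ u in (0:ℝ)..b, k u v) =ᵐ[volume.restrict (Ioi 0)] a :=
  ae_eq_of_forall_intervalIntegral_eq (intervalIntegrable_intervalIntegral_left hk hk2 hb) ha
    fun s hs => by
      rw [← htrace s hs, intervalIntegral_intervalIntegral_swap
        (integrableOn_uIoc_prod_uIoc hk hk2 hb s hs)]

theorem ae_sq_le_intervalIntegral_sq_of_trace (hk : Measurable (uncurry k))
    (hk2 : IntegrableOn (fun q : ℝ × ℝ => k q.1 q.2 ^ 2) (Icc 0 1 ×ˢ Ioi 0))
    {x c : ℝ} (hx : x ∈ Ioo 0 1) (hc : c ^ 2 = x * (1 - x)) {a : ℝ → ℝ}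
    (ha : ∀ T, 0 ≤ T → IntervalIntegrable a volume 0 T)
    (hbdry : ∀ s, 0 ≤ s → ∫ u in (0:ℝ)..1, ∫ v in (0:ℝ)..s, k u v = 0)
    (htrace : ∀ s, 0 ≤ s → ∫ u in (0:ℝ)..x, ∫ v in (0:ℝ)..s, k u v = c * ∫ v in (0:ℝ)..s, a v) :
    ∀ᵐ v ∂volume.restrict (Ioi 0), a v ^ 2 ≤ ∫ u in (0:ℝ)..1, k u v ^ 2 := by
  have hmass_x := ae_intervalIntegral_eq_of_trace hk hk2 (Ioo_subset_Icc_self hx)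
    (fun T hT => (ha T hT).const_mul c)
    (fun s hs => by rw [htrace s hs, intervalIntegral.integral_const_mul])
  have hmass_one := ae_intervalIntegral_eq_of_trace hk hk2 (right_mem_Icc.2 zero_le_one)
    (a := 0) (fun _ _ => intervalIntegrable_const) (fun s hs => by simpa using hbdry s hs)
  have hslice : ∀ᵐ v ∂volume.restrict (Ioi 0), IntegrableOn (fun u => k u v ^ 2) (Icc 0 1) := by
    rw [IntegrableOn, Measure.volume_eq_prod, ← Measure.prod_restrict] at hk2
    exact hk2.prod_left_ae
  filter_upwards [hmass_x, hmass_one, hslice] with v hmass_x hmass_one hslice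
  have hg : MemLp (fun u => k u v) 2 (volume.restrict (Ioc 0 1)) :=
    (memLp_two_iff_integrable_sq (hk.comp measurable_prodMk_right).aestronglyMeasurable).2
      (hslice.mono_set Ioc_subset_Icc_self)
  have hgi : IntervalIntegrable (fun u => k u v) volume 0 1 :=
    (intervalIntegrable_iff_integrableOn_Ioc_of_le zero_le_one).2 (hg.integrable one_le_two)
  have hxI : x ∈ uIcc (0:ℝ) 1 := by rw [uIcc_of_le zero_le_one]; exact Ioo_subset_Icc_self hx
  have hright : ∫ u in x..1, k u v = -(c * a v) := by
    rw [← intervalIntegral.integral_interval_sub_left hgi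
      (hgi.mono_set (uIcc_subset_uIcc_left hxI)), hmass_x, hmass_one]
    simp
  calc a v ^ 2 = (c * a v) ^ 2 / (x - 0) + (-(c * a v)) ^ 2 / (1 - x) := by
        have hx0 : x ≠ 0 := hx.1.ne'
        have hx1 : 1 - x ≠ 0 := by linarith [hx.2]
        field_simp
        linear_combination (-a v ^ 2) * hc
    _ ≤ ∫ u in (0:ℝ)..1, k u v ^ 2 := by
        have := sq_div_add_sq_div_le_integral_sq hx.1 hx.2 hg
        rwa [hmass_x, hright] at this

theorem integral_sq_le_integral_intervalIntegral_sq_of_trace (hk : Measurable (uncurry k))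
    (hk2 : IntegrableOn (fun q : ℝ × ℝ => k q.1 q.2 ^ 2) (Icc 0 1 ×ˢ Ioi 0))
    {x c : ℝ} (hx : x ∈ Ioo 0 1) (hc : c ^ 2 = x * (1 - x)) {a : ℝ → ℝ}
    (ha : ∀ T, 0 ≤ T → IntervalIntegrable a volume 0 T)
    (ha2 : IntegrableOn (fun v => a v ^ 2) (Ioi 0))
    (hbdry : ∀ s, 0 ≤ s → ∫ u in (0:ℝ)..1, ∫ v in (0:ℝ)..s, k u v = 0)
    (htrace : ∀ s, 0 ≤ s → ∫ u in (0:ℝ)..x, ∫ v in (0:ℝ)..s, k u v = c * ∫ v in (0:ℝ)..s, a v) :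
    ∫ v in Ioi 0, a v ^ 2 ≤ ∫ v in Ioi 0, ∫ u in (0:ℝ)..1, k u v ^ 2 := by
  refine integral_mono_ae ha2 ?_
    (ae_sq_le_intervalIntegral_sq_of_trace hk hk2 hx hc ha hbdry htrace)
  rw [IntegrableOn, Measure.volume_eq_prod, ← Measure.prod_restrict] at hk2
  simpa only [intervalIntegral.integral_of_le zero_le_one, ← integral_Icc_eq_integral_Ioc]
    using hk2.integral_prod_right

/-- Section of the Kiefer rate at a fixed level `x ∈ (0,1)`: among all absolutely
continuous `k : [0,1] × ℝ₊ → ℝ` (given by densities `k̇`) vanishing on the boundary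
and satisfying `k(x,t) = √(x(1-x)) w(t)` for all `t ≥ 0`, the minimum of
`(1/2)∬ k̇²` equals `(1/2)∫₀^∞ ẇ²`, attained at the piecewise-linear profile
`k(y,t) = √(x(1-x)) w(t) (y/x)` for `y ≤ x` and `√(x(1-x)) w(t) (1-y)/(1-x)` for
`y ≥ x`. -/
theorem stmt15 (x : ℝ) (hx : x ∈ Set.Ioo (0 : ℝ) 1) (w w' : ℝ → ℝ)
    (hw'int : ∀ T : ℝ, 0 ≤ T → IntegrableOn w' (Set.Icc 0 T))
    (hw'sq : IntegrableOn (fun s => (w' s) ^ 2) (Set.Ioi 0))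
    (hw : ∀ s : ℝ, 0 ≤ s → w s = ∫ v in (0 : ℝ)..s, w' v) :
    -- the candidate density integrates to the prescribed trace, vanishes at `y = 1`,
    (∀ s : ℝ, 0 ≤ s →
      (∫ u in (0 : ℝ)..x, ∫ v in (0 : ℝ)..s,
          (if u ≤ x then Real.sqrt (x * (1 - x)) * w' v / x
            else -(Real.sqrt (x * (1 - x)) * w' v / (1 - x))))
        = Real.sqrt (x * (1 - x)) * w s) ∧
    (∀ s : ℝ, 0 ≤ s →
      (∫ u in (0 : ℝ)..1, ∫ v in (0 : ℝ)..s,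
          (if u ≤ x then Real.sqrt (x * (1 - x)) * w' v / x
            else -(Real.sqrt (x * (1 - x)) * w' v / (1 - x))))
        = 0) ∧
    -- achieves the value `(1/2)∫₀^∞ ẇ²`,
    ((1 / 2) * ∫ s in Set.Ioi (0 : ℝ), ∫ y in (0 : ℝ)..1,
        (if y ≤ x then Real.sqrt (x * (1 - x)) * w' s / x
          else -(Real.sqrt (x * (1 - x)) * w' s / (1 - x))) ^ 2
      = (1 / 2) * ∫ s in Set.Ioi (0 : ℝ), (w' s) ^ 2) ∧
    -- and any admissible density with the same boundary and trace constraints has at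
    -- least this energy.
    (∀ kdot : ℝ → ℝ → ℝ, Measurable (Function.uncurry kdot) →
      Integrable (fun q : ℝ × ℝ => (kdot q.1 q.2) ^ 2)
        ((volume.restrict (Set.Icc (0 : ℝ) 1)).prod
          (volume.restrict (Set.Ioi (0 : ℝ)))) →
      (∀ s : ℝ, 0 ≤ s → (∫ u in (0 : ℝ)..1, ∫ v in (0 : ℝ)..s, kdot u v) = 0) →
      (∀ s : ℝ, 0 ≤ s →
        (∫ u in (0 : ℝ)..x, ∫ v in (0 : ℝ)..s, kdot u v)
          = Real.sqrt (x * (1 - x)) * w s) →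
      (1 / 2) * ∫ s in Set.Ioi (0 : ℝ), (w' s) ^ 2
        ≤ (1 / 2) * ∫ s in Set.Ioi (0 : ℝ), ∫ y in (0 : ℝ)..1, (kdot y s) ^ 2) := by
  obtain ⟨hx0, hx1⟩ := hx
  set c := Real.sqrt (x * (1 - x))
  have hc : c ^ 2 = x * (1 - x) := Real.sq_sqrt (by nlinarith)
  have h1x : 1 - x ≠ 0 := by linarith
  have htime : ∀ s : ℝ, 0 ≤ s → ∀ u : ℝ,
      ∫ v in (0 : ℝ)..s, (if u ≤ x then c * w' v / x else -(c * w' v / (1 - x))) =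
        if u ≤ x then c * w s / x else -(c * w s / (1 - x)) := fun s hs u => by
    split_ifs <;> simp [intervalIntegral.integral_div, intervalIntegral.integral_neg, hw s hs]
  have hw'iv : ∀ T : ℝ, 0 ≤ T → IntervalIntegrable w' volume 0 T := fun T hT =>
    (intervalIntegrable_iff_integrableOn_Icc_of_le hT).2 (hw'int T hT)
  refine ⟨fun s hs => ?_, fun s hs => ?_, ?_, fun kdot hmeas hint hbdry htrace => ?_⟩
  · simp_rw [htime s hs, intervalIntegral_ite_le hx0.le le_rfl]
    field_simp
    ring
  · simp_rw [htime s hs, intervalIntegral_ite_le hx0.le hx1.le]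
    field_simp
    ring
  · simp_rw [ite_pow, intervalIntegral_ite_le hx0.le hx1.le]
    congr 2 with s
    field_simp
    linear_combination x * w' s ^ 2 * hc
  · rw [Measure.prod_restrict, ← Measure.volume_eq_prod] at hint
    refine mul_le_mul_of_nonneg_left ?_ one_half_pos.le
    exact integral_sq_le_integral_intervalIntegral_sq_of_trace hmeas hint ⟨hx0, hx1⟩ hc hw'iv
      hw'sq hbdry fun s hs => by rw [htrace s hs, hw s hs]
end SpaceTimeDensity
end
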